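/- If (β₀*, β*) is an optimal solution of the SLTS problem min (1/4)·T_h(y − β₀·1 − Xβ) + λ‖β‖₁, then (β₀*, β*, α*) with α* any element of prox_{(1/2)T_h}(y − β₀*·1 − Xβ*) is an optimal solution of the STRLS problem min (1/2)‖y − β₀·1 − Xβ − α‖₂² + (1/2)T_h(α) + λ‖β‖₁. -/

import Mathlib

/-!
For every residual `r`, `min_α (1/2)‖r - α‖² + (1/2) T_h(α) = (1/4) T_h(r)`.
For a fixed index set `Λ` this is coordinatewise: `r²/4 ≤ (r - a)²/2 + a²/2`, with equality at
`a = r/2`; so the minimum is attained by halving `r` on an index set realising `T_h(r)`.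
Hence `L(β₀, β, α) ≥ F(β₀, β) ≥ F(β₀*, β*) ≥ L(β₀*, β*, α*)`, the last step because `α*` is a
prox point.
-/

/-- Trimmed squares function. -/
noncomputable def Th (n h : ℕ) (r : Fin n → ℝ) : ℝ :=
  sInf {s : ℝ | ∃ Λ : Finset (Fin n), Λ.card = h ∧ s = ∑ i ∈ Λ, r i ^ 2}

open Finset

section TrimmedSquares

variable {n h : ℕ}

lemma Th_set_finite (r : Fin n → ℝ) :
    {s : ℝ | ∃ Λ : Finset (Fin n), Λ.card = h ∧ s = ∑ i ∈ Λ, r i ^ 2}.Finite :=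
  (Set.finite_range fun Λ : Finset (Fin n) => ∑ i ∈ Λ, r i ^ 2).subset
    fun _ ⟨Λ, _, hs⟩ => ⟨Λ, hs.symm⟩

lemma Th_le_sum_sq (r : Fin n → ℝ) {Λ : Finset (Fin n)} (hΛ : Λ.card = h) :
    Th n h r ≤ ∑ i ∈ Λ, r i ^ 2 :=
  csInf_le (Th_set_finite r).bddBelow ⟨Λ, hΛ, rfl⟩

lemma exists_Th_eq_sum_sq (hhn : h ≤ n) (r : Fin n → ℝ) :
    ∃ Λ : Finset (Fin n), Λ.card = h ∧ Th n h r = ∑ i ∈ Λ, r i ^ 2 := by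
  obtain ⟨Λ, -, hΛ⟩ := exists_subset_card_eq (s := (univ : Finset (Fin n))) (by simpa using hhn)
  exact Set.Nonempty.csInf_mem (by exact ⟨_, Λ, hΛ, rfl⟩) (Th_set_finite r)

lemma quarter_Th_le_half_sum_sq_sub_add_half_Th (hhn : h ≤ n) (r a : Fin n → ℝ) :
    1 / 4 * Th n h r ≤ 1 / 2 * ∑ i, (r i - a i) ^ 2 + 1 / 2 * Th n h a := by
  obtain ⟨Λ, hΛ, hTa⟩ := exists_Th_eq_sum_sq hhn a
  calc 1 / 4 * Th n h r ≤ 1 / 4 * ∑ i ∈ Λ, r i ^ 2 := by gcongr; exact Th_le_sum_sq r hΛ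
    _ ≤ ∑ i ∈ Λ, (1 / 2 * (r i - a i) ^ 2 + 1 / 2 * a i ^ 2) := by
        rw [mul_sum]
        gcongr with i
        nlinarith [sq_nonneg (r i - 2 * a i)]
    _ = 1 / 2 * ∑ i ∈ Λ, (r i - a i) ^ 2 + 1 / 2 * Th n h a := by
        rw [sum_add_distrib, ← mul_sum, ← mul_sum, hTa]
    _ ≤ 1 / 2 * ∑ i, (r i - a i) ^ 2 + 1 / 2 * Th n h a := by
        gcongr
        exact subset_univ Λ

lemma exists_half_sum_sq_sub_add_half_Th_le (hhn : h ≤ n) (r : Fin n → ℝ) :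
    ∃ a : Fin n → ℝ, 1 / 2 * ∑ i, (r i - a i) ^ 2 + 1 / 2 * Th n h a ≤ 1 / 4 * Th n h r := by
  obtain ⟨Λ, hΛ, hTr⟩ := exists_Th_eq_sum_sq hhn r
  refine ⟨fun i => if i ∈ Λ then r i / 2 else r i, ?_⟩
  have hdist : ∑ i, (r i - if i ∈ Λ then r i / 2 else r i) ^ 2 = ∑ i ∈ Λ, (r i / 2) ^ 2 := by
    rw [← sum_subset (subset_univ Λ) fun i _ hi => by simp [hi]]
    exact sum_congr rfl fun i hi => by simp only [if_pos hi]; ring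
  have hTa : Th n h (fun i => if i ∈ Λ then r i / 2 else r i) ≤ ∑ i ∈ Λ, (r i / 2) ^ 2 :=
    (Th_le_sum_sq _ hΛ).trans_eq (sum_congr rfl fun i hi => by simp only [if_pos hi])
  have hhalf : ∑ i ∈ Λ, (r i / 2) ^ 2 = 1 / 4 * Th n h r := by
    rw [hTr, mul_sum]
    exact sum_congr rfl fun i _ => by ring
  rw [hdist]
  linarith

end TrimmedSquares

theorem stmt_4_general (n d h : ℕ) (hhn : h ≤ n)
    (y : Fin n → ℝ) (X : Matrix (Fin n) (Fin d) ℝ) (lam : ℝ)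
    (F : ℝ → (Fin d → ℝ) → ℝ)
    (hF : F = fun β₀ β =>
      (1 / 4) * Th n h (fun i => y i - β₀ - X.mulVec β i) + lam * ∑ j, |β j|)
    (L : ℝ → (Fin d → ℝ) → (Fin n → ℝ) → ℝ)
    (hL : L = fun β₀ β α =>
      (1 / 2) * ∑ i, (y i - β₀ - X.mulVec β i - α i) ^ 2 + (1 / 2) * Th n h α
        + lam * ∑ j, |β j|)
    (β₀s : ℝ) (βs : Fin d → ℝ)
    (hopt : ∀ (β₀ : ℝ) (β : Fin d → ℝ), F β₀s βs ≤ F β₀ β)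
    (αs : Fin n → ℝ)
    (hprox : ∀ α : Fin n → ℝ,
      (1 / 2) * Th n h αs + (1 / 2) * ∑ i, (αs i - (y i - β₀s - X.mulVec βs i)) ^ 2 ≤
        (1 / 2) * Th n h α + (1 / 2) * ∑ i, (α i - (y i - β₀s - X.mulVec βs i)) ^ 2) :
    ∀ (β₀ : ℝ) (β : Fin d → ℝ) (α : Fin n → ℝ), L β₀s βs αs ≤ L β₀ β α := by
  intro β₀ β α
  subst hF hL
  obtain ⟨a, ha⟩ :=
    exists_half_sum_sq_sub_add_half_Th_le hhn fun i => y i - β₀s - X.mulVec βs i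
  have hαs := hprox a
  have hlower := quarter_Th_le_half_sum_sq_sub_add_half_Th hhn (fun i => y i - β₀ - X.mulVec β i) α
  have hFopt := hopt β₀ β
  simp only [sub_sq_comm (αs _), sub_sq_comm (a _)] at hαs
  simp only at hFopt hlower ha ⊢
  linarith

/-- an optimal solution of SLTS together with a prox point of (1/2)T_h
at the residual is optimal for STRLS. -/
theorem stmt_4 (n d h : ℕ) (hh : 1 ≤ h) (hhn : h ≤ n)
    (y : Fin n → ℝ) (X : Matrix (Fin n) (Fin d) ℝ) (lam : ℝ) (hlam : 0 < lam)
    (F : ℝ → (Fin d → ℝ) → ℝ)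
    (hF : F = fun β₀ β =>
      (1 / 4) * Th n h (fun i => y i - β₀ - X.mulVec β i) + lam * ∑ j, |β j|)
    (L : ℝ → (Fin d → ℝ) → (Fin n → ℝ) → ℝ)
    (hL : L = fun β₀ β α =>
      (1 / 2) * ∑ i, (y i - β₀ - X.mulVec β i - α i) ^ 2 + (1 / 2) * Th n h α
        + lam * ∑ j, |β j|)
    (β₀s : ℝ) (βs : Fin d → ℝ)
    (hopt : ∀ (β₀ : ℝ) (β : Fin d → ℝ), F β₀s βs ≤ F β₀ β)
    (αs : Fin n → ℝ)
    (hprox : ∀ α : Fin n → ℝ,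
      (1 / 2) * Th n h αs + (1 / 2) * ∑ i, (αs i - (y i - β₀s - X.mulVec βs i)) ^ 2 ≤
        (1 / 2) * Th n h α + (1 / 2) * ∑ i, (α i - (y i - β₀s - X.mulVec βs i)) ^ 2) :
    ∀ (β₀ : ℝ) (β : Fin d → ℝ) (α : Fin n → ℝ), L β₀s βs αs ≤ L β₀ β α :=
  stmt_4_general n d h hhn y X lam F hF L hL β₀s βs hopt αs hprox
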